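/- Let G be a group, X a finite-dimensional complex vector space with dim X ≥ 1, and π : G → GL(X) an irreducible representation such that π(g) - I is nilpotent for every g ∈ G. Then dim X = 1 and π is the trivial representation. -/

import Mathlib

/-- If all weighted power sums over a finset of nonzero complex numbers vanish
(with nonzero weights), the finset is empty. -/
lemma aux_powersum {c : ℂ → ℂ} (t : Finset ℂ) (ht0 : (0:ℂ) ∉ t)
    (hc : ∀ μ ∈ t, c μ ≠ 0) (hsum : ∀ k : ℕ, 1 ≤ k → ∑ μ ∈ t, c μ * μ ^ k = 0) :
    t = ∅ := by
  induction t using Finset.strongInduction generalizing c with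
  | H t ih =>
    rcases t.eq_empty_or_nonempty with rfl | ⟨ν, hν⟩
    · rfl
    · exfalso
      have herase : t.erase ν = ∅ := by
        apply ih (t.erase ν) (Finset.erase_ssubset hν)
          (c := fun μ => c μ * (μ - ν))
        · exact fun h => ht0 (Finset.mem_of_mem_erase h)
        · intro μ hμ
          have h1 : μ ≠ ν := Finset.ne_of_mem_erase hμ
          exact mul_ne_zero (hc μ (Finset.mem_of_mem_erase hμ)) (sub_ne_zero.mpr h1)
        · intro k hk
          have h1 : ∑ μ ∈ t, c μ * (μ - ν) * μ ^ k = 0 := by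
            have e1 := hsum (k+1) (by omega)
            have e2 := hsum k hk
            calc ∑ μ ∈ t, c μ * (μ - ν) * μ ^ k
                = ∑ μ ∈ t, (c μ * μ ^ (k+1) - ν * (c μ * μ ^ k)) := by
                  apply Finset.sum_congr rfl; intro μ _; ring
              _ = 0 := by
                  rw [Finset.sum_sub_distrib, e1, ← Finset.mul_sum, e2]; ring
          rw [← Finset.add_sum_erase _ _ hν] at h1
          simpa using h1
      have ht : t = {ν} := by
        have := Finset.insert_erase hν
        rw [herase] at this
        simpa using this.symm
      have := hsum 1 le_rfl
      rw [ht] at this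
      simp at this
      rcases this with h | h
      · exact hc ν hν h
      · exact ht0 (h ▸ hν)

open LinearMap Module

lemma aux_nilpotent_of_trace_pow {X : Type*} [AddCommGroup X] [Module ℂ X]
    [FiniteDimensional ℂ X]
    (f : Module.End ℂ X) (h : ∀ k : ℕ, 1 ≤ k → LinearMap.trace ℂ X (f ^ k) = 0) :
    IsNilpotent f := by
  classical
  set N : ℂ → Submodule ℂ X := f.maxGenEigenspace with hN
  have hind := f.independent_maxGenEigenspace
  have htop := f.iSup_maxGenEigenspace_eq_top
  have hds := DirectSum.isInternal_submodule_of_iSupIndep_of_iSup_eq_top hind htop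
  have h_fin : {μ | N μ ≠ ⊥}.Finite := WellFoundedGT.finite_ne_bot_of_iSupIndep hind
  have hmaps1 : ∀ μ : ℂ, ∀ x ∈ N μ, f x ∈ N μ := fun μ =>
    f.mapsTo_maxGenEigenspace_of_comm rfl μ
  have hmaps : ∀ (k : ℕ) (μ : ℂ), Set.MapsTo (f ^ k) (N μ) (N μ) := fun k μ =>
    Module.End.pow_apply_mem_of_forall_mem k (hmaps1 μ)
  have key : ∀ (k : ℕ) (μ : ℂ),
      LinearMap.trace ℂ (N μ) ((f ^ k).restrict (hmaps k μ)) =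
        μ ^ k * (finrank ℂ (N μ) : ℂ) := by
    intro k μ
    set fr : Module.End ℂ (N μ) := f.restrict (hmaps1 μ) with hfr
    have hrestr : (f ^ k).restrict (hmaps k μ) = fr ^ k :=
      (Module.End.pow_restrict k (hmaps1 μ)).symm
    set a : Module.End ℂ (N μ) := algebraMap ℂ (Module.End ℂ (N μ)) μ with ha
    have hn : IsNilpotent (fr - a) := by
      have h0 := f.isNilpotent_restrict_maxGenEigenspace_sub_algebraMap μ
      have he : (f - algebraMap ℂ (Module.End ℂ X) μ).restrict
          (f.mapsTo_maxGenEigenspace_of_comm (Algebra.mul_sub_algebraMap_commutes f μ) μ)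
          = fr - a := by
        ext x
        simp [fr, a, LinearMap.restrict_apply, LinearMap.restrict_coe_apply, Module.algebraMap_end_apply]; rfl
      rwa [he] at h0
    set n : Module.End ℂ (N μ) := fr - a with hn'
    have hfa : fr = a + n := by rw [hn']; abel
    have hcomm : Commute a n := Algebra.commute_algebraMap_left μ n
    rw [hrestr, hfa, hcomm.add_pow, map_sum]
    rw [Finset.sum_eq_single k]
    · simp [a, Algebra.algebraMap_eq_smul_one, smul_pow, LinearMap.trace_one]
    · intro j hj hjk
      have hj' : j < k := lt_of_le_of_ne (Finset.mem_range_succ_iff.mp hj) hjk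
      have hna : Commute (n ^ (k - j)) (a ^ j) :=
        ((Algebra.commute_algebraMap_left μ n).symm.pow_right j).pow_left (k - j)
      have hnc : Commute (n ^ (k - j)) ((k.choose j : ℕ) : Module.End ℂ (N μ)) :=
        ((Nat.cast_commute (k.choose j) n).symm.pow_left _)
      have hnil : IsNilpotent (a ^ j * n ^ (k - j) * (k.choose j : Module.End ℂ (N μ))) := by
        have h1 : IsNilpotent (n ^ (k - j)) := hn.pow_of_pos (by omega)
        have c1 : Commute (n ^ (k - j)) (a ^ j * ((k.choose j : ℕ) : Module.End ℂ (N μ))) :=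
          Commute.mul_right hna hnc
        have h2 := c1.isNilpotent_mul_right h1
        have e : n ^ (k - j) * (a ^ j * ((k.choose j : ℕ) : Module.End ℂ (N μ)))
            = a ^ j * n ^ (k - j) * ((k.choose j : ℕ) : Module.End ℂ (N μ)) := by
          rw [← mul_assoc, hna.eq]
        rwa [e] at h2
      exact (LinearMap.isNilpotent_trace_of_isNilpotent hnil).eq_zero
    · intro hk
      exact absurd (Finset.self_mem_range_succ k) hk
  have hsum : ∀ k : ℕ, 1 ≤ k →
      ∑ μ ∈ h_fin.toFinset, μ ^ k * (finrank ℂ (N μ) : ℂ) = 0 := by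
    intro k hk
    calc ∑ μ ∈ h_fin.toFinset, μ ^ k * (finrank ℂ (N μ) : ℂ)
        = ∑ μ ∈ h_fin.toFinset, LinearMap.trace ℂ (N μ) ((f ^ k).restrict (hmaps k μ)) :=
          (Finset.sum_congr rfl fun μ _ => (key k μ)).symm
      _ = LinearMap.trace ℂ X (f ^ k) :=
          (LinearMap.trace_eq_sum_trace_restrict' hds h_fin (hmaps k)).symm
      _ = 0 := h k hk
  have ht : h_fin.toFinset.erase 0 = ∅ := by
    apply aux_powersum (c := fun μ => (finrank ℂ (N μ) : ℂ))
    · exact Finset.notMem_erase 0 _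
    · intro μ hμ
      have hb : N μ ≠ ⊥ := by simpa using Finset.mem_of_mem_erase hμ
      simp only [ne_eq, Nat.cast_eq_zero]
      rw [Submodule.finrank_eq_zero]
      exact hb
    · intro k hk
      have h0 : (finrank ℂ (N (0:ℂ)) : ℂ) * (0:ℂ) ^ k = 0 := by
        rw [zero_pow (by omega)]; ring
      rw [Finset.sum_erase (f := fun μ => ((finrank ℂ (N μ) : ℂ)) * μ ^ k) _ h0]
      calc ∑ μ ∈ h_fin.toFinset, (finrank ℂ (N μ) : ℂ) * μ ^ k
          = ∑ μ ∈ h_fin.toFinset, μ ^ k * (finrank ℂ (N μ) : ℂ) := by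
            apply Finset.sum_congr rfl; intro μ _; ring
        _ = 0 := hsum k hk
  have hbot : ∀ μ : ℂ, μ ≠ 0 → N μ = ⊥ := by
    intro μ hμ
    by_contra hb
    have : μ ∈ h_fin.toFinset.erase 0 := by
      rw [Finset.mem_erase]
      exact ⟨hμ, by simpa using hb⟩
    rw [ht] at this
    exact absurd this (Finset.notMem_empty μ)
  have hN0 : N 0 = ⊤ := by
    rw [eq_top_iff, ← htop]
    apply iSup_le
    intro μ
    rcases eq_or_ne μ 0 with rfl | hμ
    · exact le_rfl
    · rw [show f.maxGenEigenspace μ = N μ from rfl, hbot μ hμ]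
      exact bot_le
  have hiff := (LinearMap.charpoly_nilpotent_tfae f).out 0 2
  rw [hiff]
  intro m
  have hm : m ∈ N 0 := hN0 ▸ Submodule.mem_top
  obtain ⟨k, hk⟩ := (f.mem_maxGenEigenspace 0 m).mp hm
  exact ⟨k, by simpa using hk⟩

attribute [local instance] LieRing.ofAssociativeRing

theorem stmt7 {G X : Type*} [Group G] [AddCommGroup X] [Module ℂ X]
    [FiniteDimensional ℂ X] (hX : 1 ≤ Module.finrank ℂ X)
    (π : Representation ℂ G X)
    (hirr : ∀ S : Submodule ℂ X, (∀ (g : G) (x : X), x ∈ S → π g x ∈ S) → S = ⊥ ∨ S = ⊤)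
    (hnil : ∀ g : G, IsNilpotent (π g - 1)) :
    Module.finrank ℂ X = 1 ∧ ∀ g : G, π g = 1 := by
  classical
  haveI : Nontrivial X := by
    apply nontrivial_of_finrank_pos (R := ℂ)
    omega
  set I : Submodule ℂ (Module.End ℂ X) :=
    Submodule.span ℂ (Set.range (fun g : G => (π g : Module.End ℂ X) - 1)) with hI
  have hgen : ∀ g : G, (π g : Module.End ℂ X) - 1 ∈ I := fun g =>
    Submodule.subset_span ⟨g, rfl⟩
  have hmulle : I * I ≤ I := by
    rw [hI, Submodule.span_mul_span, Submodule.span_le]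
    rintro _ ⟨_, ⟨g, rfl⟩, _, ⟨h, rfl⟩, rfl⟩
    show ((π g : Module.End ℂ X) - 1) * ((π h : Module.End ℂ X) - 1) ∈
      Submodule.span ℂ (Set.range (fun g : G => (π g : Module.End ℂ X) - 1))
    have e : ((π g : Module.End ℂ X) - 1) * ((π h : Module.End ℂ X) - 1)
        = ((π (g*h) : Module.End ℂ X) - 1) - ((π g : Module.End ℂ X) - 1)
          - ((π h : Module.End ℂ X) - 1) := by
      rw [map_mul π]
      noncomm_ring
    rw [e]
    exact sub_mem (sub_mem (hgen (g*h)) (hgen g)) (hgen h)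
  have hmul : ∀ a ∈ I, ∀ b ∈ I, a * b ∈ I := fun a ha b hb =>
    hmulle (Submodule.mul_mem_mul ha hb)
  have hpow : ∀ a ∈ I, ∀ k : ℕ, 1 ≤ k → a ^ k ∈ I := by
    intro a ha k hk
    induction k with
    | zero => omega
    | succ k ih =>
      rcases Nat.eq_or_lt_of_le hk with hk1 | hk2
      · simpa [← hk1] using ha
      · rw [pow_succ]
        exact hmul _ (ih (by omega)) _ ha
  have htr : ∀ a ∈ I, LinearMap.trace ℂ X a = 0 := by
    intro a ha
    have hle : I ≤ LinearMap.ker (LinearMap.trace ℂ X) := by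
      rw [hI, Submodule.span_le]
      rintro _ ⟨g, rfl⟩
      exact (LinearMap.isNilpotent_trace_of_isNilpotent (hnil g)).eq_zero
    exact hle ha
  have hnilI : ∀ a ∈ I, IsNilpotent a := fun a ha =>
    aux_nilpotent_of_trace_pow a (fun k hk => htr _ (hpow a ha k hk))
  -- package as a Lie subalgebra of endomorphisms
  let L : LieSubalgebra ℂ (Module.End ℂ X) :=
    { I with
      lie_mem' := fun {x y} hx hy => by
        have e : (⁅x, y⁆ : Module.End ℂ X) = x * y - y * x := rfl
        show ⁅x, y⁆ ∈ I
        rw [e]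
        exact sub_mem (hmul _ hx _ hy) (hmul _ hy _ hx) }
  have hmemL : ∀ a : Module.End ℂ X, a ∈ L ↔ a ∈ I := fun a => Iff.rfl
  haveI : LieModule.IsNilpotent L X := by
    rw [LieModule.isNilpotent_iff_forall' (R := ℂ)]
    rintro ⟨x, hx⟩
    have e : LieModule.toEnd ℂ L X ⟨x, hx⟩ = x := by
      rw [LieSubalgebra.toEnd_mk]
      have := LieModule.toEnd_module_end (R := ℂ) (M := X)
      rw [this]
      rfl
    rw [e]
    exact hnilI x hx
  haveI := LieModule.nontrivial_max_triv_of_isNilpotent (R := ℂ) (L := L) (M := X)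
  obtain ⟨m, hm0⟩ := exists_ne (0 : LieModule.maxTrivSubmodule ℂ L X)
  have hmX : (m : X) ≠ 0 := by
    intro hc
    apply hm0
    ext
    exact hc
  have hfix : ∀ g : G, π g (m : X) = (m : X) := by
    intro g
    have h2 := (LieModule.mem_maxTrivSubmodule ℂ L X (m : X)).mp m.2
      ⟨(π g : Module.End ℂ X) - 1, hgen g⟩
    have h3 : ((π g : Module.End ℂ X) - 1) (m : X) = 0 := h2
    have h4 : π g (m : X) - (m : X) = 0 := by
      simpa [LinearMap.sub_apply] using h3
    exact sub_eq_zero.mp h4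
  set V : Submodule ℂ X := ⨅ g : G, LinearMap.ker ((π g : Module.End ℂ X) - 1) with hV
  have hmemV : ∀ x : X, x ∈ V ↔ ∀ g : G, π g x = x := by
    intro x
    rw [hV, Submodule.mem_iInf]
    apply forall_congr'
    intro g
    rw [LinearMap.mem_ker, LinearMap.sub_apply, Module.End.one_apply, sub_eq_zero]
  have hVinv : ∀ (g : G) (x : X), x ∈ V → π g x ∈ V := by
    intro g x hx
    rw [hmemV] at hx ⊢
    intro h
    rw [hx g]
    exact hx h
  have hVne : V ≠ ⊥ := by
    intro hc
    apply hmX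
    have : (m : X) ∈ V := (hmemV _).mpr hfix
    rw [hc] at this
    simpa using this
  rcases hirr V hVinv with hb | htV
  · exact absurd hb hVne
  have htriv : ∀ g : G, π g = 1 := by
    intro g
    ext x
    have hx : x ∈ V := htV ▸ Submodule.mem_top
    rw [Module.End.one_apply]
    exact (hmemV x).mp hx g
  refine ⟨?_, htriv⟩
  obtain ⟨x, hx0⟩ := exists_ne (0 : X)
  rcases hirr (ℂ ∙ x) (fun g y hy => by rw [htriv g]; simpa using hy) with hb | htp
  · rw [Submodule.span_singleton_eq_bot] at hb
    exact absurd hb hx0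
  · rw [← finrank_top ℂ X, ← htp, finrank_span_singleton hx0]
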